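/- For every α ∈ (0, 1/2) and every T > 0 there exists a constant C > 0 (depending only on α and T) such that for all s, t with 0 ≤ s < t ≤ T and all x, x̄, y ∈ [0,1], ∫ₛᵗ ∫₀¹ (G^N_{t−θ}(x,r) − G^N_{t−θ}(x̄,r))² · p_{θ−s}(y − r)² dr dθ ≤ C · |x − x̄|^{2α} · (t − s)^{−1/2−α}. -/

import Mathlib

open Real MeasureTheory

/-- The standard one-dimensional heat kernel `p_t(x) = (4πt)^{-1/2} exp(-x²/(4t))`. -/
noncomputable def heatKernel (t x : ℝ) : ℝ :=
  (4 * π * t) ^ (-(1/2) : ℝ) * Real.exp (-x ^ 2 / (4 * t))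

/-- The Neumann heat kernel on `[0,1]`:
`G^N_t(x,y) = 1 + 2 ∑_{k=1}^∞ e^{-k²π²t} cos(kπx) cos(kπy)`. -/
noncomputable def GN (t x y : ℝ) : ℝ :=
  1 + 2 * ∑' k : ℕ, Real.exp (-((k + 1 : ℝ) ^ 2 * π ^ 2 * t)) *
      Real.cos ((k + 1 : ℝ) * π * x) * Real.cos ((k + 1 : ℝ) * π * y)

open intervalIntegral

noncomputable def aco (τ x x' : ℝ) (k : ℕ) : ℝ :=
  2 * Real.exp (-((k + 1 : ℝ) ^ 2 * π ^ 2 * τ)) *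
    (Real.cos ((k + 1 : ℝ) * π * x) - Real.cos ((k + 1 : ℝ) * π * x'))

lemma summable_exp_sq (c : ℝ) (hc : 0 < c) :
    Summable (fun k : ℕ => Real.exp (-((k + 1 : ℝ) ^ 2 * c))) := by
  have hg : Summable (fun k : ℕ => Real.exp (-c) ^ (k + 1)) := by
    exact (summable_geometric_of_lt_one (Real.exp_pos _).le
      (Real.exp_lt_one_iff.2 (by linarith))).comp_injective (add_left_injective 1)
  refine Summable.of_nonneg_of_le (fun k => (Real.exp_pos _).le) (fun k => ?_) hg
  rw [← Real.exp_nat_mul]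
  apply Real.exp_le_exp.2
  push_cast
  nlinarith [mul_nonneg (mul_nonneg (show (0:ℝ) ≤ (k:ℝ)+1 by positivity) (Nat.cast_nonneg k)) hc.le]

lemma tsum_exp_sq_le (c : ℝ) (hc : 0 < c) :
    ∑' k : ℕ, Real.exp (-((k + 1 : ℝ) ^ 2 * c)) ≤ Real.sqrt π / Real.sqrt c := by
  apply Real.tsum_le_of_sum_range_le (fun n => (Real.exp_pos _).le)
  intro n
  have h1 : ∑ i ∈ Finset.range n, Real.exp (-((i + 1 : ℝ) ^ 2 * c))
      ≤ ∫ x in (0:ℝ)..(0 + n : ℕ), Real.exp (-(x ^ 2 * c)) := by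
    have ha : AntitoneOn (fun x : ℝ => Real.exp (-(x ^ 2 * c))) (Set.Icc 0 (0 + (n:ℝ))) := by
      intro a ha b hb hab
      apply Real.exp_le_exp.2
      have h2 : a ^ 2 ≤ b ^ 2 := by nlinarith [ha.1]
      nlinarith
    have := ha.sum_le_integral
    simpa using this
  refine h1.trans ?_
  have h2 : ∫ x in (0:ℝ)..(0 + n : ℕ), Real.exp (-(x ^ 2 * c))
      ≤ ∫ x : ℝ, Real.exp (-c * x ^ 2) := by
    rw [intervalIntegral.integral_of_le (by positivity)]
    have heq : ∀ x : ℝ, Real.exp (-(x ^ 2 * c)) = Real.exp (-c * x ^ 2) := by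
      intro x; ring_nf
    simp_rw [heq]
    exact setIntegral_le_integral (integrable_exp_neg_mul_sq hc)
      (Filter.Eventually.of_forall fun x => (Real.exp_pos _).le)
  refine h2.trans ?_
  rw [integral_gaussian, Real.sqrt_div pi_nonneg]

lemma rpow_mul_exp_le (β u : ℝ) (hβ : 0 ≤ β) (hu : 0 ≤ u) :
    u ^ β * Real.exp (-(u ^ 2 / 2)) ≤ Real.exp (β ^ 2 / 2) := by
  have h1 : u ^ β ≤ Real.exp (u * β) := by
    calc u ^ β ≤ Real.exp u ^ β :=
          Real.rpow_le_rpow hu (by linarith [Real.add_one_le_exp u]) hβ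
      _ = Real.exp (u * β) := by
          rw [Real.rpow_def_of_pos (Real.exp_pos u), Real.log_exp]
  calc u ^ β * Real.exp (-(u ^ 2 / 2)) ≤ Real.exp (u * β) * Real.exp (-(u ^ 2 / 2)) := by
        apply mul_le_mul_of_nonneg_right h1 (Real.exp_pos _).le
    _ = Real.exp (u * β + -(u ^ 2 / 2)) := (Real.exp_add _ _).symm
    _ ≤ Real.exp (β ^ 2 / 2) := Real.exp_le_exp.2 (by nlinarith [sq_nonneg (u - β)])

lemma term_bound (β a : ℝ) (hβ : 0 ≤ β) (ha : 0 < a) (k : ℕ) :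
    ((k : ℝ) + 1) ^ β * Real.exp (-((k + 1 : ℝ) ^ 2 * a)) ≤
      Real.exp (β ^ 2 / 2) * a ^ (-(β / 2)) * Real.exp (-((k + 1 : ℝ) ^ 2 * (a / 2))) := by
  set u : ℝ := ((k : ℝ) + 1) * Real.sqrt a with hu_def
  have hu : 0 ≤ u := by positivity
  have hu2 : u ^ 2 = ((k : ℝ) + 1) ^ 2 * a := by
    rw [hu_def, mul_pow, Real.sq_sqrt ha.le]
  have huβ : u ^ β = ((k : ℝ) + 1) ^ β * a ^ (β / 2) := by
    rw [hu_def, Real.mul_rpow (by positivity) (Real.sqrt_nonneg a),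
      Real.sqrt_eq_rpow, ← Real.rpow_mul ha.le]
    ring_nf
  have key := rpow_mul_exp_le β u hβ hu
  rw [huβ, hu2] at key
  have hsplit : Real.exp (-((k + 1 : ℝ) ^ 2 * a)) =
      Real.exp (-(((k : ℝ) + 1) ^ 2 * a / 2)) * Real.exp (-((k + 1 : ℝ) ^ 2 * (a / 2))) := by
    rw [← Real.exp_add]; ring_nf
  have hpos : (0 : ℝ) < a ^ (β / 2) := Real.rpow_pos_of_pos ha _
  have haneg : a ^ (-(β / 2)) = (a ^ (β / 2))⁻¹ := Real.rpow_neg ha.le _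
  rw [hsplit, haneg]
  calc ((k : ℝ) + 1) ^ β * (Real.exp (-(((k : ℝ) + 1) ^ 2 * a / 2)) *
        Real.exp (-((k + 1 : ℝ) ^ 2 * (a / 2))))
      = (((k : ℝ) + 1) ^ β * a ^ (β / 2) * Real.exp (-(((k : ℝ) + 1) ^ 2 * a / 2))) *
        ((a ^ (β / 2))⁻¹ * Real.exp (-((k + 1 : ℝ) ^ 2 * (a / 2)))) := by
        field_simp
    _ ≤ Real.exp (β ^ 2 / 2) * ((a ^ (β / 2))⁻¹ * Real.exp (-((k + 1 : ℝ) ^ 2 * (a / 2)))) := by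
        exact mul_le_mul_of_nonneg_right key (by positivity)
    _ = Real.exp (β ^ 2 / 2) * (a ^ (β / 2))⁻¹ * Real.exp (-((k + 1 : ℝ) ^ 2 * (a / 2))) := by ring

lemma tsum_pow_exp_le (β : ℝ) (hβ : 0 ≤ β) : ∃ K : ℝ, 0 < K ∧ ∀ a : ℝ, 0 < a →
    ∑' k : ℕ, ((k : ℝ) + 1) ^ β * Real.exp (-((k + 1 : ℝ) ^ 2 * a)) ≤
      K * a ^ (-((1 + β) / 2)) := by
  refine ⟨Real.exp (β ^ 2 / 2) * Real.sqrt π * Real.sqrt 2, by positivity, fun a ha => ?_⟩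
  have ha2 : (0 : ℝ) < a / 2 := by linarith
  have hsum2 := summable_exp_sq (a / 2) ha2
  have hsummaj : Summable (fun k : ℕ =>
      Real.exp (β ^ 2 / 2) * a ^ (-(β / 2)) * Real.exp (-((k + 1 : ℝ) ^ 2 * (a / 2)))) :=
    hsum2.mul_left _
  have hsum1 : Summable (fun k : ℕ => ((k : ℝ) + 1) ^ β * Real.exp (-((k + 1 : ℝ) ^ 2 * a))) :=
    Summable.of_nonneg_of_le (fun k => by positivity) (term_bound β a hβ ha) hsummaj
  calc ∑' k : ℕ, ((k : ℝ) + 1) ^ β * Real.exp (-((k + 1 : ℝ) ^ 2 * a))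
      ≤ ∑' k : ℕ, Real.exp (β ^ 2 / 2) * a ^ (-(β / 2)) * Real.exp (-((k + 1 : ℝ) ^ 2 * (a / 2))) :=
        Summable.tsum_le_tsum (term_bound β a hβ ha) hsum1 hsummaj
    _ = Real.exp (β ^ 2 / 2) * a ^ (-(β / 2)) * ∑' k : ℕ, Real.exp (-((k + 1 : ℝ) ^ 2 * (a / 2))) := by
        rw [tsum_mul_left]
    _ ≤ Real.exp (β ^ 2 / 2) * a ^ (-(β / 2)) * (Real.sqrt π / Real.sqrt (a / 2)) := by
        apply mul_le_mul_of_nonneg_left (tsum_exp_sq_le _ ha2) (by positivity)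
    _ = Real.exp (β ^ 2 / 2) * Real.sqrt π * Real.sqrt 2 * a ^ (-((1 + β) / 2)) := by
        rw [Real.sqrt_div ha.le,
          show a ^ (-((1+β)/2)) = a ^ (-(β/2)) * a ^ (-(1/2) : ℝ) by
            rw [← Real.rpow_add ha]; ring_nf,
          show a ^ (-(1/2) : ℝ) = (Real.sqrt a)⁻¹ by
            rw [Real.rpow_neg ha.le, Real.sqrt_eq_rpow]]
        have h2 : Real.sqrt 2 ≠ 0 := by positivity
        have hA : Real.sqrt a ≠ 0 := by positivity
        field_simp

lemma summable_pow_exp (β a : ℝ) (hβ : 0 ≤ β) (ha : 0 < a) :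
    Summable (fun k : ℕ => ((k : ℝ) + 1) ^ β * Real.exp (-((k + 1 : ℝ) ^ 2 * a))) :=
  Summable.of_nonneg_of_le (fun k => by positivity) (term_bound β a hβ ha)
    ((summable_exp_sq (a / 2) (by linarith)).mul_left _)

lemma abs_cos_sub_cos_le (a b : ℝ) : |Real.cos a - Real.cos b| ≤ |a - b| := by
  rw [Real.cos_sub_cos, abs_mul, abs_mul]
  calc |(-2 : ℝ)| * |Real.sin ((a + b) / 2)| * |Real.sin ((a - b) / 2)|
      ≤ 2 * 1 * |(a - b) / 2| := by
        apply mul_le_mul _ (Real.abs_sin_le_abs) (abs_nonneg _) (by norm_num)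
        apply mul_le_mul _ (Real.abs_sin_le_one _) (abs_nonneg _) (by norm_num)
        norm_num
    _ = |a - b| := by rw [abs_div]; norm_num; ring

lemma cos_interp (γ a b : ℝ) (hγ0 : 0 ≤ γ) (hγ1 : γ ≤ 1) :
    |Real.cos a - Real.cos b| ≤ 2 ^ (1 - γ) * |a - b| ^ γ := by
  set w := |Real.cos a - Real.cos b| with hw
  have hw0 : 0 ≤ w := abs_nonneg _
  have hw2 : w ≤ 2 := by
    calc w ≤ |Real.cos a| + |Real.cos b| := abs_sub _ _
      _ ≤ 1 + 1 := add_le_add (Real.abs_cos_le_one a) (Real.abs_cos_le_one b)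
      _ = 2 := by norm_num
  have hwd : w ≤ |a - b| := _root_.abs_cos_sub_cos_le a b
  rcases eq_or_lt_of_le hw0 with h0 | h0
  · rw [← h0]
    positivity
  · have h1 : w = w ^ (1 - γ) * w ^ γ := by
      rw [← Real.rpow_add h0]; norm_num
    rw [h1]
    exact mul_le_mul (Real.rpow_le_rpow hw0 hw2 (by linarith))
      (Real.rpow_le_rpow hw0 hwd hγ0) (Real.rpow_nonneg hw0 _) (by positivity)

lemma integral_cos_int (m : ℤ) (hm : m ≠ 0) :
    ∫ r in (0:ℝ)..1, Real.cos ((m : ℝ) * π * r) = 0 := by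
  have hc : (m : ℝ) * π ≠ 0 := by
    apply mul_ne_zero _ Real.pi_ne_zero
    exact_mod_cast hm
  rw [intervalIntegral.integral_comp_mul_left (fun x => Real.cos x) hc]
  simp [Real.sin_int_mul_pi m]

lemma cos_orth (j k : ℕ) :
    ∫ r in (0:ℝ)..1, Real.cos ((j + 1 : ℝ) * π * r) * Real.cos ((k + 1 : ℝ) * π * r) =
      if j = k then 1 / 2 else 0 := by
  by_cases hjk : j = k
  · subst hjk
    simp only [if_pos rfl]
    have heq : ∀ r : ℝ, Real.cos ((j + 1 : ℝ) * π * r) * Real.cos ((j + 1 : ℝ) * π * r)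
        = 1 / 2 + Real.cos ((((2 * j + 2 : ℕ) : ℤ) : ℝ) * π * r) / 2 := by
      intro r
      rw [← sq, Real.cos_sq]
      push_cast
      ring_nf
    simp_rw [heq]
    rw [intervalIntegral.integral_add
      (Continuous.intervalIntegrable (by continuity) _ _)
      (Continuous.intervalIntegrable (by continuity) _ _),
      intervalIntegral.integral_div, intervalIntegral.integral_div,
      integral_cos_int ((2 * j + 2 : ℕ) : ℤ)
        (by exact_mod_cast (by omega : (2 * j + 2 : ℕ) ≠ 0))]
    simp
  · simp only [if_neg hjk]
    have heq : ∀ r : ℝ, Real.cos ((j + 1 : ℝ) * π * r) * Real.cos ((k + 1 : ℝ) * π * r)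
        = Real.cos ((((j : ℤ) - k : ℤ) : ℝ) * π * r) / 2
          + Real.cos ((((j + k + 2 : ℕ) : ℤ) : ℝ) * π * r) / 2 := by
      intro r
      have h1 := Real.cos_add ((j + 1 : ℝ) * π * r) ((k + 1 : ℝ) * π * r)
      have h2 := Real.cos_sub ((j + 1 : ℝ) * π * r) ((k + 1 : ℝ) * π * r)
      have e1 : (j + 1 : ℝ) * π * r + (k + 1 : ℝ) * π * r
          = (((j + k + 2 : ℕ) : ℤ) : ℝ) * π * r := by push_cast; ring
      have e2 : (j + 1 : ℝ) * π * r - (k + 1 : ℝ) * π * r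
          = (((j : ℤ) - k : ℤ) : ℝ) * π * r := by push_cast; ring
      rw [e1] at h1
      rw [e2] at h2
      linarith
    simp_rw [heq]
    rw [intervalIntegral.integral_add
      (Continuous.intervalIntegrable (by continuity) _ _)
      (Continuous.intervalIntegrable (by continuity) _ _),
      intervalIntegral.integral_div, intervalIntegral.integral_div,
      integral_cos_int ((j : ℤ) - k) (by omega),
      integral_cos_int ((j + k + 2 : ℕ) : ℤ)
        (by exact_mod_cast (by omega : (j + k + 2 : ℕ) ≠ 0))]
    norm_num

lemma parseval (a : ℕ → ℝ) (ha : Summable (fun k => |a k|)) :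
    ∫ r in (0:ℝ)..1, (∑' k : ℕ, a k * Real.cos ((k + 1 : ℝ) * π * r)) ^ 2
      = (∑' k : ℕ, (a k) ^ 2) / 2 := by
  set μ : Measure ℝ := volume.restrict (Set.Ioc (0:ℝ) 1) with hμ
  have hμ1 : μ Set.univ = 1 := by
    rw [hμ, Measure.restrict_apply MeasurableSet.univ, Set.univ_inter, Real.volume_Ioc]
    norm_num
  set cK : ℕ → ℝ → ℝ := fun k r => Real.cos ((k + 1 : ℝ) * π * r) with hcK
  have hcKc : ∀ k, Continuous (cK k) := fun k => by fun_prop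
  have hcKb : ∀ k r, |cK k r| ≤ 1 := fun k r => Real.abs_cos_le_one _
  set f : ℝ → ℝ := fun r => ∑' k : ℕ, a k * cK k r with hf
  set A : ℝ := ∑' k : ℕ, |a k| with hA
  have hA0 : 0 ≤ A := tsum_nonneg (fun k => abs_nonneg _)
  have hnorm : ∀ k r, ‖a k * cK k r‖ ≤ |a k| := by
    intro k r
    rw [Real.norm_eq_abs, abs_mul]
    calc |a k| * |cK k r| ≤ |a k| * 1 :=
          mul_le_mul_of_nonneg_left (hcKb k r) (abs_nonneg _)
      _ = |a k| := mul_one _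
  have ha' : Summable (fun k => ‖a k‖) := ha
  have hfc : Continuous f := continuous_tsum (fun k => by fun_prop) ha hnorm
  have hsumf : ∀ r, Summable (fun k => a k * cK k r) := fun r =>
    Summable.of_norm (Summable.of_nonneg_of_le (fun k => norm_nonneg _) (fun k => hnorm k r) ha)
  have hfb : ∀ r, |f r| ≤ A := by
    intro r
    calc |f r| ≤ ∑' k, ‖a k * cK k r‖ := norm_tsum_le_tsum_norm
          (Summable.of_nonneg_of_le (fun k => norm_nonneg _) (fun k => hnorm k r) ha)
      _ ≤ A := Summable.tsum_le_tsum (fun k => hnorm k r)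
          (Summable.of_nonneg_of_le (fun k => norm_nonneg _) (fun k => hnorm k r) ha) ha
  -- generic: for continuous bounded g with |g| ≤ B, swap tsum and integral of k ↦ a k * cK k r * g r
  have swap : ∀ (g : ℝ → ℝ), Continuous g → ∀ B : ℝ, (∀ r, |g r| ≤ B) →
      ∫ r, (∑' k : ℕ, a k * cK k r * g r) ∂μ = ∑' k : ℕ, ∫ r, a k * cK k r * g r ∂μ := by
    intro g hg B hB
    have hB0 : 0 ≤ B := le_trans (abs_nonneg _) (hB 0)
    refine (integral_tsum_of_summable_integral_norm (fun k => ?_) ?_).symm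
    · exact Continuous.integrableOn_Ioc (by fun_prop)
    · apply Summable.of_nonneg_of_le (fun k => integral_nonneg (fun r => norm_nonneg _))
        (fun k => ?_) (ha.mul_right B)
      calc ∫ r, ‖a k * cK k r * g r‖ ∂μ ≤ ∫ _r, |a k| * B ∂μ := by
            apply integral_mono_of_nonneg (Filter.Eventually.of_forall fun r => norm_nonneg _)
              (integrable_const _) (Filter.Eventually.of_forall fun r => ?_)
            show ‖a k * cK k r * g r‖ ≤ |a k| * B
            rw [Real.norm_eq_abs, abs_mul]
            exact mul_le_mul (hnorm k r) (hB r) (abs_nonneg _) (abs_nonneg _)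
        _ = |a k| * B := by
            rw [MeasureTheory.integral_const, Measure.real, hμ1]; simp
  have orth : ∀ j k : ℕ, ∫ r, cK j r * cK k r ∂μ = if j = k then 1/2 else 0 := by
    intro j k
    rw [hμ, ← intervalIntegral.integral_of_le (zero_le_one)]
    exact cos_orth j k
  have inner : ∀ j : ℕ, ∫ r, cK j r * f r ∂μ = a j * (1/2) := by
    intro j
    have e1 : ∀ r, cK j r * f r = ∑' k : ℕ, a k * cK k r * cK j r := by
      intro r
      rw [mul_comm, hf]
      exact tsum_mul_right.symm
    simp_rw [e1]
    rw [swap (cK j) (hcKc j) 1 (hcKb j)]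
    have e2 : ∀ k : ℕ, ∫ r, a k * cK k r * cK j r ∂μ
        = a k * (if k = j then 1/2 else 0) := by
      intro k
      rw [← orth k j, ← MeasureTheory.integral_const_mul]
      congr 1; funext r; ring
    simp_rw [e2]
    rw [tsum_eq_single j (fun k hk => by rw [if_neg hk, mul_zero])]
    rw [if_pos rfl]
  have e3 : ∀ r, f r ^ 2 = ∑' k : ℕ, a k * cK k r * f r := by
    intro r
    rw [sq, hf]
    exact tsum_mul_right.symm
  rw [intervalIntegral.integral_of_le (zero_le_one), ← hμ]
  calc ∫ r, f r ^ 2 ∂μ = ∫ r, ∑' k : ℕ, a k * cK k r * f r ∂μ := by simp_rw [e3]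
    _ = ∑' k : ℕ, ∫ r, a k * cK k r * f r ∂μ := swap f hfc A hfb
    _ = ∑' k : ℕ, a k * (a k * (1/2)) := by
        apply tsum_congr; intro k
        rw [← inner k, ← MeasureTheory.integral_const_mul]
        congr 1; funext r; ring
    _ = ∑' k : ℕ, (a k) ^ 2 * (1/2) := by
        apply tsum_congr; intro k; ring
    _ = (∑' k : ℕ, (a k) ^ 2) / 2 := by
        rw [tsum_mul_right]; ring

lemma summable_exp_pi (τ : ℝ) (hτ : 0 < τ) :
    Summable (fun k : ℕ => Real.exp (-((k + 1 : ℝ) ^ 2 * π ^ 2 * τ))) := by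
  have h := summable_exp_sq (π ^ 2 * τ) (by positivity)
  simpa [mul_assoc] using h

lemma GN_diff_eq (τ x x' : ℝ) (hτ : 0 < τ) (r : ℝ) :
    GN τ x r - GN τ x' r = ∑' k : ℕ, aco τ x x' k * Real.cos ((k + 1 : ℝ) * π * r) := by
  have hE := summable_exp_pi τ hτ
  have hs : ∀ z : ℝ, Summable (fun k : ℕ => Real.exp (-((k + 1 : ℝ) ^ 2 * π ^ 2 * τ)) *
      Real.cos ((k + 1 : ℝ) * π * z) * Real.cos ((k + 1 : ℝ) * π * r)) := by
    intro z
    apply Summable.of_norm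
    apply Summable.of_nonneg_of_le (fun k => norm_nonneg _) _ hE
    intro k
    rw [Real.norm_eq_abs, abs_mul, abs_mul, Real.abs_exp]
    calc Real.exp (-((k + 1 : ℝ) ^ 2 * π ^ 2 * τ)) * |Real.cos ((k + 1 : ℝ) * π * z)| *
          |Real.cos ((k + 1 : ℝ) * π * r)|
        ≤ Real.exp (-((k + 1 : ℝ) ^ 2 * π ^ 2 * τ)) * 1 * 1 := by
          apply mul_le_mul _ (Real.abs_cos_le_one _) (abs_nonneg _) (by positivity)
          exact mul_le_mul_of_nonneg_left (Real.abs_cos_le_one _) (Real.exp_pos _).le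
      _ = Real.exp (-((k + 1 : ℝ) ^ 2 * π ^ 2 * τ)) := by ring
  rw [GN, GN]
  rw [show ∀ A B : ℝ, 1 + 2 * A - (1 + 2 * B) = 2 * (A - B) by intro A B; ring]
  rw [← Summable.tsum_sub (hs x) (hs x'), ← tsum_mul_left]
  apply tsum_congr
  intro k
  rw [aco]
  ring

lemma abs_aco_le (α τ x x' : ℝ) (hα0 : 0 < α) (hα1 : α ≤ 1) (k : ℕ) :
    |aco τ x x' k| ≤ 2 * 2 ^ (1 - α) * π ^ α * |x - x'| ^ α *
      (((k : ℝ) + 1) ^ α * Real.exp (-((k + 1 : ℝ) ^ 2 * (π ^ 2 * τ)))) := by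
  rw [aco, abs_mul, abs_mul]
  have h1 : |Real.cos ((k + 1 : ℝ) * π * x) - Real.cos ((k + 1 : ℝ) * π * x')|
      ≤ 2 ^ (1 - α) * (((k : ℝ) + 1) ^ α * π ^ α * |x - x'| ^ α) := by
    refine (cos_interp α _ _ (le_of_lt hα0) hα1).trans ?_
    have e1 : |(k + 1 : ℝ) * π * x - (k + 1 : ℝ) * π * x'| = ((k : ℝ) + 1) * π * |x - x'| := by
      rw [show (k + 1 : ℝ) * π * x - (k + 1 : ℝ) * π * x' = ((k : ℝ) + 1) * π * (x - x') by ring,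
        abs_mul, abs_mul]
      rw [abs_of_nonneg (by positivity : (0:ℝ) ≤ (k : ℝ) + 1), abs_of_nonneg Real.pi_nonneg]
    rw [e1]
    apply mul_le_mul_of_nonneg_left _ (by positivity)
    rw [Real.mul_rpow (by positivity) (abs_nonneg _), Real.mul_rpow (by positivity) Real.pi_nonneg]
  calc |(2:ℝ)| * |Real.exp (-((k + 1 : ℝ) ^ 2 * π ^ 2 * τ))| *
        |Real.cos ((k + 1 : ℝ) * π * x) - Real.cos ((k + 1 : ℝ) * π * x')|
      ≤ 2 * Real.exp (-((k + 1 : ℝ) ^ 2 * π ^ 2 * τ)) *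
        (2 ^ (1 - α) * (((k : ℝ) + 1) ^ α * π ^ α * |x - x'| ^ α)) := by
        rw [abs_two, Real.abs_exp]
        exact mul_le_mul_of_nonneg_left h1 (by positivity)
    _ = 2 * 2 ^ (1 - α) * π ^ α * |x - x'| ^ α *
        (((k : ℝ) + 1) ^ α * Real.exp (-((k + 1 : ℝ) ^ 2 * (π ^ 2 * τ)))) := by
        rw [← mul_assoc ((k + 1 : ℝ) ^ 2) (π ^ 2) τ]
        ring

lemma summable_abs_aco (α τ x x' : ℝ) (hα0 : 0 < α) (hα1 : α ≤ 1) (hτ : 0 < τ) :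
    Summable (fun k => |aco τ x x' k|) :=
  Summable.of_nonneg_of_le (fun k => abs_nonneg _) (abs_aco_le α τ x x' hα0 hα1)
    ((summable_pow_exp α (π ^ 2 * τ) hα0.le (by positivity)).mul_left _)

lemma GN_diff_sup (α : ℝ) (hα0 : 0 < α) (hα1 : α ≤ 1) : ∃ C : ℝ, 0 < C ∧
    ∀ τ x x' r : ℝ, 0 < τ →
      |GN τ x r - GN τ x' r| ≤ C * |x - x'| ^ α * τ ^ (-((1 + α) / 2)) := by
  obtain ⟨K, hK, hKle⟩ := tsum_pow_exp_le α hα0.le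
  refine ⟨2 * 2 ^ (1 - α) * π ^ α * K * ((π ^ 2) ^ (-((1 + α) / 2))), by positivity, ?_⟩
  intro τ x x' r hτ
  have hπτ : (0:ℝ) < π ^ 2 * τ := by positivity
  have hmaj := (summable_pow_exp α (π ^ 2 * τ) hα0.le hπτ).mul_left
    (2 * 2 ^ (1 - α) * π ^ α * |x - x'| ^ α)
  have habs : Summable (fun k => ‖aco τ x x' k * Real.cos ((k + 1 : ℝ) * π * r)‖) := by
    apply Summable.of_nonneg_of_le (fun k => norm_nonneg _) _
      ((summable_abs_aco α τ x x' hα0 hα1 hτ))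
    intro k
    rw [Real.norm_eq_abs, abs_mul]
    exact mul_le_mul_of_nonneg_left (Real.abs_cos_le_one _) (abs_nonneg _) |>.trans
      (by rw [mul_one])
  rw [GN_diff_eq τ x x' hτ r]
  calc |∑' k : ℕ, aco τ x x' k * Real.cos ((k + 1 : ℝ) * π * r)|
      ≤ ∑' k : ℕ, ‖aco τ x x' k * Real.cos ((k + 1 : ℝ) * π * r)‖ :=
        norm_tsum_le_tsum_norm habs
    _ ≤ ∑' k : ℕ, 2 * 2 ^ (1 - α) * π ^ α * |x - x'| ^ α *
          (((k : ℝ) + 1) ^ α * Real.exp (-((k + 1 : ℝ) ^ 2 * (π ^ 2 * τ)))) := by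
        apply Summable.tsum_le_tsum _ habs hmaj
        intro k
        rw [Real.norm_eq_abs, abs_mul]
        calc |aco τ x x' k| * |Real.cos ((k + 1 : ℝ) * π * r)| ≤ |aco τ x x' k| * 1 :=
              mul_le_mul_of_nonneg_left (Real.abs_cos_le_one _) (abs_nonneg _)
          _ = |aco τ x x' k| := mul_one _
          _ ≤ _ := abs_aco_le α τ x x' hα0 hα1 k
    _ = 2 * 2 ^ (1 - α) * π ^ α * |x - x'| ^ α *
          ∑' k : ℕ, ((k : ℝ) + 1) ^ α * Real.exp (-((k + 1 : ℝ) ^ 2 * (π ^ 2 * τ))) :=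
        tsum_mul_left
    _ ≤ 2 * 2 ^ (1 - α) * π ^ α * |x - x'| ^ α * (K * (π ^ 2 * τ) ^ (-((1 + α) / 2))) := by
        apply mul_le_mul_of_nonneg_left (hKle _ hπτ) (by positivity)
    _ = 2 * 2 ^ (1 - α) * π ^ α * K * ((π ^ 2) ^ (-((1 + α) / 2))) * |x - x'| ^ α *
          τ ^ (-((1 + α) / 2)) := by
        rw [Real.mul_rpow (by positivity) hτ.le]
        ring

lemma GN_diff_L2 (α : ℝ) (hα0 : 0 < α) (hα1 : α < 1 / 2) : ∃ C : ℝ, 0 < C ∧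
    ∀ τ x x' : ℝ, 0 < τ →
      (∫ r in (0:ℝ)..1, (GN τ x r - GN τ x' r) ^ 2) ≤
        C * |x - x'| ^ (2 * α) * τ ^ (-(1/2) - α) := by
  obtain ⟨K, hK, hKle⟩ := tsum_pow_exp_le (2 * α) (by linarith)
  refine ⟨(2 * 2 ^ (1 - α) * π ^ α) ^ 2 * K * ((2 * π ^ 2) ^ (-((1 + 2 * α) / 2))),
    by positivity, ?_⟩
  intro τ x x' hτ
  have hα1' : α ≤ 1 := by linarith
  have h2πτ : (0:ℝ) < 2 * π ^ 2 * τ := by positivity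
  set B : ℝ := (2 * 2 ^ (1 - α) * π ^ α) ^ 2 * |x - x'| ^ (2 * α) with hB
  have hB0 : 0 ≤ B := by positivity
  have hptwise : ∀ k : ℕ, (aco τ x x' k) ^ 2 ≤
      B * (((k : ℝ) + 1) ^ (2 * α) * Real.exp (-((k + 1 : ℝ) ^ 2 * (2 * π ^ 2 * τ)))) := by
    intro k
    have h1 := abs_aco_le α τ x x' hα0 hα1' k
    have h2 : (aco τ x x' k) ^ 2 ≤ (2 * 2 ^ (1 - α) * π ^ α * |x - x'| ^ α *
        (((k : ℝ) + 1) ^ α * Real.exp (-((k + 1 : ℝ) ^ 2 * (π ^ 2 * τ))))) ^ 2 := by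
      rw [← sq_abs]
      exact pow_le_pow_left₀ (abs_nonneg _) h1 2
    refine h2.trans_eq ?_
    have e1 : (|x - x'| ^ α) ^ 2 = |x - x'| ^ (2 * α) := by
      rw [← Real.rpow_natCast (|x - x'| ^ α) 2, ← Real.rpow_mul (abs_nonneg _)]
      norm_num; rw [mul_comm]
    have e2 : (((k : ℝ) + 1) ^ α) ^ 2 = ((k : ℝ) + 1) ^ (2 * α) := by
      rw [← Real.rpow_natCast (((k : ℝ) + 1) ^ α) 2, ← Real.rpow_mul (by positivity)]
      norm_num; rw [mul_comm]
    have e3 : (Real.exp (-((k + 1 : ℝ) ^ 2 * (π ^ 2 * τ)))) ^ 2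
        = Real.exp (-((k + 1 : ℝ) ^ 2 * (2 * π ^ 2 * τ))) := by
      rw [sq, ← Real.exp_add]
      congr 1; ring
    rw [hB]
    simp only [mul_pow]
    rw [e1, e2, e3]
  have hmaj := (summable_pow_exp (2 * α) (2 * π ^ 2 * τ) (by linarith) h2πτ).mul_left B
  have hsq : Summable (fun k => (aco τ x x' k) ^ 2) :=
    Summable.of_nonneg_of_le (fun k => sq_nonneg _) hptwise hmaj
  have habs := summable_abs_aco α τ x x' hα0 hα1' hτ
  calc ∫ r in (0:ℝ)..1, (GN τ x r - GN τ x' r) ^ 2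
      = ∫ r in (0:ℝ)..1, (∑' k : ℕ, aco τ x x' k * Real.cos ((k + 1 : ℝ) * π * r)) ^ 2 := by
        apply intervalIntegral.integral_congr
        intro r _
        dsimp only
        rw [GN_diff_eq τ x x' hτ r]
    _ = (∑' k : ℕ, (aco τ x x' k) ^ 2) / 2 := parseval _ habs
    _ ≤ ∑' k : ℕ, (aco τ x x' k) ^ 2 := by
        have h0 : 0 ≤ ∑' k : ℕ, (aco τ x x' k) ^ 2 := tsum_nonneg (fun k => sq_nonneg _)
        linarith
    _ ≤ ∑' k : ℕ, B * (((k : ℝ) + 1) ^ (2 * α) *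
          Real.exp (-((k + 1 : ℝ) ^ 2 * (2 * π ^ 2 * τ)))) :=
        Summable.tsum_le_tsum hptwise hsq hmaj
    _ = B * ∑' k : ℕ, ((k : ℝ) + 1) ^ (2 * α) *
          Real.exp (-((k + 1 : ℝ) ^ 2 * (2 * π ^ 2 * τ))) := tsum_mul_left
    _ ≤ B * (K * (2 * π ^ 2 * τ) ^ (-((1 + 2 * α) / 2))) :=
        mul_le_mul_of_nonneg_left (hKle _ h2πτ) hB0
    _ = (2 * 2 ^ (1 - α) * π ^ α) ^ 2 * K * ((2 * π ^ 2) ^ (-((1 + 2 * α) / 2))) *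
          |x - x'| ^ (2 * α) * τ ^ (-(1/2) - α) := by
        rw [Real.mul_rpow (by positivity) hτ.le, hB,
          show (-((1 + 2 * α) / 2)) = (-(1/2 : ℝ) - α) by ring]
        ring

lemma GN_diff_cont (τ x x' : ℝ) (hτ : 0 < τ) :
    Continuous fun r => GN τ x r - GN τ x' r := by
  have he : (fun r => GN τ x r - GN τ x' r)
      = fun r => ∑' k : ℕ, aco τ x x' k * Real.cos ((k + 1 : ℝ) * π * r) :=
    funext fun r => GN_diff_eq τ x x' hτ r
  rw [he]
  apply continuous_tsum (fun k => by fun_prop)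
    ((summable_exp_pi τ hτ).mul_left 4)
  intro k r
  rw [Real.norm_eq_abs, abs_mul]
  have h1 : |aco τ x x' k| ≤ 4 * Real.exp (-((k + 1 : ℝ) ^ 2 * π ^ 2 * τ)) := by
    rw [aco, abs_mul, abs_mul, abs_two, Real.abs_exp]
    have h2 : |Real.cos ((k + 1 : ℝ) * π * x) - Real.cos ((k + 1 : ℝ) * π * x')| ≤ 2 := by
      calc |Real.cos ((k + 1 : ℝ) * π * x) - Real.cos ((k + 1 : ℝ) * π * x')|
          ≤ |Real.cos ((k + 1 : ℝ) * π * x)| + |Real.cos ((k + 1 : ℝ) * π * x')| := abs_sub _ _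
        _ ≤ 1 + 1 := add_le_add (Real.abs_cos_le_one _) (Real.abs_cos_le_one _)
        _ = 2 := by norm_num
    calc 2 * Real.exp (-((k + 1 : ℝ) ^ 2 * π ^ 2 * τ)) *
          |Real.cos ((k + 1 : ℝ) * π * x) - Real.cos ((k + 1 : ℝ) * π * x')|
        ≤ 2 * Real.exp (-((k + 1 : ℝ) ^ 2 * π ^ 2 * τ)) * 2 := by
          apply mul_le_mul_of_nonneg_left h2 (by positivity)
      _ = 4 * Real.exp (-((k + 1 : ℝ) ^ 2 * π ^ 2 * τ)) := by ring
  calc |aco τ x x' k| * |Real.cos ((k + 1 : ℝ) * π * r)|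
      ≤ |aco τ x x' k| * 1 := mul_le_mul_of_nonneg_left (Real.abs_cos_le_one _) (abs_nonneg _)
    _ = |aco τ x x' k| := mul_one _
    _ ≤ 4 * Real.exp (-((k + 1 : ℝ) ^ 2 * π ^ 2 * τ)) := h1

lemma heatKernel_sq_eq (σ z : ℝ) (hσ : 0 < σ) :
    heatKernel σ z ^ 2 = (4 * π * σ)⁻¹ * Real.exp (-(2 * σ)⁻¹ * z ^ 2) := by
  rw [heatKernel, mul_pow]
  congr 1
  · rw [← Real.rpow_natCast ((4 * π * σ) ^ (-(1/2) : ℝ)) 2,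
      ← Real.rpow_mul (by positivity),
      show ((-(1/2) : ℝ) * (2:ℕ)) = (-1 : ℝ) by push_cast; norm_num,
      Real.rpow_neg_one]
  · rw [sq, ← Real.exp_add]
    congr 1
    field_simp
    ring

lemma heatKernel_sq_le (σ z : ℝ) (hσ : 0 < σ) : heatKernel σ z ^ 2 ≤ (4 * π * σ)⁻¹ := by
  rw [heatKernel_sq_eq σ z hσ]
  calc (4 * π * σ)⁻¹ * Real.exp (-(2 * σ)⁻¹ * z ^ 2) ≤ (4 * π * σ)⁻¹ * 1 := by
        apply mul_le_mul_of_nonneg_left _ (by positivity)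
        rw [Real.exp_le_one_iff]
        have : (0:ℝ) ≤ (2 * σ)⁻¹ * z ^ 2 := by positivity
        linarith
    _ = (4 * π * σ)⁻¹ := mul_one _

lemma heatKernel_cont (σ y : ℝ) :
    Continuous (fun r : ℝ => heatKernel σ (y - r)) := by
  unfold heatKernel
  fun_prop

lemma heatKernel_sq_integral_le (σ y : ℝ) (hσ : 0 < σ) :
    ∫ r in Set.Ioc (0:ℝ) 1, heatKernel σ (y - r) ^ 2 ≤
      (Real.sqrt (2 * π) / (4 * π)) * σ ^ (-(1/2) : ℝ) := by
  have hb : (0:ℝ) < (2 * σ)⁻¹ := by positivity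
  have hint : Integrable (fun r : ℝ => (4 * π * σ)⁻¹ *
      Real.exp (-(2 * σ)⁻¹ * (y - r) ^ 2)) := by
    exact ((integrable_exp_neg_mul_sq hb).comp_sub_left y).const_mul _
  have h1 : ∫ r in Set.Ioc (0:ℝ) 1, heatKernel σ (y - r) ^ 2
      = ∫ r in Set.Ioc (0:ℝ) 1, (4 * π * σ)⁻¹ * Real.exp (-(2 * σ)⁻¹ * (y - r) ^ 2) := by
    apply setIntegral_congr_fun measurableSet_Ioc
    intro r _
    exact heatKernel_sq_eq σ (y - r) hσ
  rw [h1]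
  calc ∫ r in Set.Ioc (0:ℝ) 1, (4 * π * σ)⁻¹ * Real.exp (-(2 * σ)⁻¹ * (y - r) ^ 2)
      ≤ ∫ r : ℝ, (4 * π * σ)⁻¹ * Real.exp (-(2 * σ)⁻¹ * (y - r) ^ 2) :=
        setIntegral_le_integral hint (Filter.Eventually.of_forall fun r => by positivity)
    _ = (4 * π * σ)⁻¹ * ∫ r : ℝ, Real.exp (-(2 * σ)⁻¹ * (y - r) ^ 2) :=
        integral_const_mul _ _
    _ = (4 * π * σ)⁻¹ * ∫ u : ℝ, Real.exp (-(2 * σ)⁻¹ * u ^ 2) := by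
        congr 1
        have h1 : ∫ r : ℝ, Real.exp (-(2 * σ)⁻¹ * (y - r) ^ 2)
            = ∫ r : ℝ, (fun t : ℝ => Real.exp (-(2 * σ)⁻¹ * (-t) ^ 2)) (r - y) := by
          congr 1; funext r; ring_nf
        rw [h1, integral_sub_right_eq_self (fun t : ℝ => Real.exp (-(2 * σ)⁻¹ * (-t) ^ 2)) y]
        simp only [neg_sq]
    _ = (4 * π * σ)⁻¹ * Real.sqrt (π / (2 * σ)⁻¹) := by rw [integral_gaussian]
    _ = (Real.sqrt (2 * π) / (4 * π)) * σ ^ (-(1/2) : ℝ) := by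
        have e : Real.sqrt (π / (2 * σ)⁻¹) = Real.sqrt (2 * π) * σ ^ ((1:ℝ)/2) := by
          rw [show π / (2 * σ)⁻¹ = (2 * π) * σ by field_simp,
            Real.sqrt_mul (by positivity) σ, Real.sqrt_eq_rpow σ]
        have e2 : σ ^ (-1 : ℝ) * σ ^ ((1:ℝ)/2) = σ ^ (-(1/2) : ℝ) := by
          rw [← Real.rpow_add hσ]; norm_num
        calc (4 * π * σ)⁻¹ * Real.sqrt (π / (2 * σ)⁻¹)
            = Real.sqrt (2 * π) * (4 * π)⁻¹ * (σ ^ (-1 : ℝ) * σ ^ ((1:ℝ)/2)) := by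
              rw [e, mul_inv, show (σ:ℝ)⁻¹ = σ ^ (-1 : ℝ) by rw [Real.rpow_neg_one]]
              ring
          _ = (Real.sqrt (2 * π) / (4 * π)) * σ ^ (-(1/2) : ℝ) := by
              rw [e2]; ring

theorem neumann_kernel_weighted_space_increment (α T : ℝ) (hα0 : 0 < α) (hα1 : α < 1 / 2)
    (hT : 0 < T) :
    ∃ C : ℝ, 0 < C ∧ ∀ s t x x' y : ℝ, 0 ≤ s → s < t → t ≤ T →
      x ∈ Set.Icc (0 : ℝ) 1 → x' ∈ Set.Icc (0 : ℝ) 1 → y ∈ Set.Icc (0 : ℝ) 1 →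
      (∫ θ in s..t, ∫ r in (0 : ℝ)..1,
          (GN (t - θ) x r - GN (t - θ) x' r) ^ 2 * (heatKernel (θ - s) (y - r)) ^ 2) ≤
        C * |x - x'| ^ (2 * α) * (t - s) ^ (-(1/2) - α) := by
  obtain ⟨C1, hC1, hsup⟩ := GN_diff_sup α hα0 (by linarith)
  obtain ⟨C2, hC2, hL2⟩ := GN_diff_L2 α hα0 hα1
  set c3 : ℝ := Real.sqrt (2 * π) / (4 * π) with hc3
  have hc30 : 0 < c3 := by rw [hc3]; positivity
  have hhalf : (0:ℝ) < 1/2 - α := by linarith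
  refine ⟨8 * C1 ^ 2 * c3 + C2 * (2 * π)⁻¹ * (1/2 - α)⁻¹, by positivity, ?_⟩
  intro s t x x' y hs hst htT hx hx' hy
  have hδ : 0 < t - s := by linarith
  have hd0 : (0:ℝ) ≤ |x - x'| := abs_nonneg _
  set δ : ℝ := t - s with hδdef
  set d : ℝ := |x - x'| with hd
  set m : ℝ := (s + t) / 2 with hm
  have hsm : s ≤ m := by rw [hm]; linarith
  have hmt : m ≤ t := by rw [hm]; linarith
  have hms : m - s = δ / 2 := by rw [hm, hδdef]; ring
  have htm : t - m = δ / 2 := by rw [hm, hδdef]; ring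
  have hdnn : 0 ≤ d ^ (2 * α) := Real.rpow_nonneg hd0 _
  have hδnn : ∀ q : ℝ, 0 ≤ δ ^ q := fun q => Real.rpow_nonneg hδ.le _
  set I : ℝ → ℝ := fun θ => ∫ r in (0:ℝ)..1,
    (GN (t - θ) x r - GN (t - θ) x' r) ^ 2 * heatKernel (θ - s) (y - r) ^ 2 with hIdef
  show ∫ θ in s..t, I θ ≤ _
  have hCsum : (0:ℝ) ≤ 8 * C1 ^ 2 * c3 + C2 * (2 * π)⁻¹ * (1/2 - α)⁻¹ := by positivity
  by_cases hI : IntervalIntegrable I volume s t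
  swap
  · rw [intervalIntegral.integral_undef hI]
    exact mul_nonneg (mul_nonneg hCsum hdnn) (hδnn _)
  have hIsm : IntervalIntegrable I volume s m := hI.mono_set (by
    rw [Set.uIcc_of_le hsm, Set.uIcc_of_le hst.le]
    exact Set.Icc_subset_Icc le_rfl hmt)
  have hImt : IntervalIntegrable I volume m t := hI.mono_set (by
    rw [Set.uIcc_of_le hmt, Set.uIcc_of_le hst.le]
    exact Set.Icc_subset_Icc hsm le_rfl)
  rw [← intervalIntegral.integral_add_adjacent_intervals hIsm hImt]
  set A1 : ℝ := C1 ^ 2 * c3 * 4 * d ^ (2 * α) * δ ^ (-(1 + α)) with hA1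
  have hA10 : 0 ≤ A1 := by
    rw [hA1]
    exact mul_nonneg (mul_nonneg (mul_nonneg (mul_nonneg (sq_nonneg C1) hc30.le)
      (by norm_num)) hdnn) (hδnn _)
  set A2 : ℝ := C2 * (2 * π)⁻¹ * d ^ (2 * α) * δ⁻¹ with hA2
  have hA20 : 0 ≤ A2 := by
    rw [hA2]
    exact mul_nonneg (mul_nonneg (mul_nonneg hC2.le (by positivity)) hdnn)
      (inv_nonneg.mpr hδ.le)
  -- pointwise bound on (s, m]
  have core1 : ∀ θ ∈ Set.Icc s m, θ ≠ s → I θ ≤ A1 * (θ - s) ^ (-(1/2) : ℝ) := by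
    intro θ hθ hθs
    have hσ : 0 < θ - s := lt_of_le_of_ne (by linarith [hθ.1]) (by
      intro h; exact hθs (by linarith))
    have hτδ : δ / 2 ≤ t - θ := by
      have h2 := hθ.2
      rw [hm] at h2
      rw [hδdef]
      linarith
    have hτ : 0 < t - θ := lt_of_lt_of_le (by linarith) hτδ
    set M : ℝ := (C1 * d ^ α * (t - θ) ^ (-((1 + α) / 2))) ^ 2 with hM
    have hM0 : 0 ≤ M := sq_nonneg _
    have hIθ : I θ = ∫ r in Set.Ioc (0:ℝ) 1,
        (GN (t - θ) x r - GN (t - θ) x' r) ^ 2 * heatKernel (θ - s) (y - r) ^ 2 := by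
      rw [hIdef]
      exact intervalIntegral.integral_of_le zero_le_one
    rw [hIθ]
    have hgint : Integrable (fun r => M * heatKernel (θ - s) (y - r) ^ 2)
        (volume.restrict (Set.Ioc (0:ℝ) 1)) :=
      (((heatKernel_cont (θ - s) y).pow 2).integrableOn_Ioc).const_mul M
    calc ∫ r in Set.Ioc (0:ℝ) 1,
          (GN (t - θ) x r - GN (t - θ) x' r) ^ 2 * heatKernel (θ - s) (y - r) ^ 2
        ≤ ∫ r in Set.Ioc (0:ℝ) 1, M * heatKernel (θ - s) (y - r) ^ 2 := by
          apply integral_mono_of_nonneg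
            (Filter.Eventually.of_forall fun r => by positivity) hgint
            (Filter.Eventually.of_forall fun r => ?_)
          dsimp only
          apply mul_le_mul_of_nonneg_right _ (sq_nonneg _)
          rw [hM, ← sq_abs (GN (t - θ) x r - GN (t - θ) x' r)]
          exact pow_le_pow_left₀ (abs_nonneg _) (hsup (t - θ) x x' r hτ) 2
      _ = M * ∫ r in Set.Ioc (0:ℝ) 1, heatKernel (θ - s) (y - r) ^ 2 := integral_const_mul _ _
      _ ≤ M * (c3 * (θ - s) ^ (-(1/2) : ℝ)) :=
          mul_le_mul_of_nonneg_left (heatKernel_sq_integral_le (θ - s) y hσ) hM0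
      _ ≤ A1 * (θ - s) ^ (-(1/2) : ℝ) := by
          rw [← mul_assoc]
          apply mul_le_mul_of_nonneg_right _ (Real.rpow_nonneg hσ.le _)
          have e1 : M = C1 ^ 2 * d ^ (2 * α) * (t - θ) ^ (-(1 + α)) := by
            rw [hM, mul_pow, mul_pow]
            congr 1
            · congr 1
              rw [← Real.rpow_natCast (d ^ α) 2, ← Real.rpow_mul hd0]
              norm_num; rw [mul_comm]
            · rw [← Real.rpow_natCast ((t - θ) ^ (-((1 + α) / 2))) 2,
                ← Real.rpow_mul hτ.le,
                show ((-((1 + α) / 2)) * (2:ℕ) : ℝ) = -(1 + α) by push_cast; ring]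
          have e2 : (t - θ) ^ (-(1 + α) : ℝ) ≤ 4 * δ ^ (-(1 + α)) := by
            calc (t - θ) ^ (-(1 + α) : ℝ) ≤ (δ / 2) ^ (-(1 + α) : ℝ) :=
                  Real.rpow_le_rpow_of_nonpos (half_pos hδ) hτδ (by linarith)
              _ = δ ^ (-(1 + α)) / 2 ^ (-(1 + α)) :=
                  Real.div_rpow hδ.le (by norm_num : (0:ℝ) ≤ 2) _
              _ = δ ^ (-(1 + α)) * 2 ^ (1 + α) := by
                  rw [div_eq_mul_inv, ← Real.rpow_neg (by norm_num : (0:ℝ) ≤ 2)]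
                  norm_num
              _ ≤ δ ^ (-(1 + α)) * 4 := by
                  apply mul_le_mul_of_nonneg_left _ (hδnn _)
                  calc (2:ℝ) ^ (1 + α) ≤ 2 ^ (2:ℝ) :=
                        Real.rpow_le_rpow_of_exponent_le (by norm_num) (by linarith)
                    _ = 4 := by
                        rw [show (2:ℝ) ^ (2:ℝ) = (2:ℝ) ^ ((2:ℕ):ℝ) by norm_num,
                          Real.rpow_natCast]
                        norm_num
              _ = 4 * δ ^ (-(1 + α)) := by ring
          calc M * c3 = (C1 ^ 2 * d ^ (2 * α) * c3) * (t - θ) ^ (-(1 + α)) := by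
                rw [e1]; ring
            _ ≤ (C1 ^ 2 * d ^ (2 * α) * c3) * (4 * δ ^ (-(1 + α))) := by
                apply mul_le_mul_of_nonneg_left e2
                exact mul_nonneg (mul_nonneg (sq_nonneg _) hdnn) hc30.le
            _ = A1 := by rw [hA1]; ring
  -- pointwise bound on [m, t)
  have core2 : ∀ θ ∈ Set.Icc m t, θ ≠ t → I θ ≤ A2 * (t - θ) ^ (-(1/2) - α : ℝ) := by
    intro θ hθ hθt
    have hτ : 0 < t - θ := lt_of_le_of_ne (by linarith [hθ.2]) (by
      intro h; exact hθt (by linarith))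
    have hσδ : δ / 2 ≤ θ - s := by
      have h1 := hθ.1
      linarith [hms]
    have hσ : 0 < θ - s := lt_of_lt_of_le (half_pos hδ) hσδ
    have h4πσ : (0:ℝ) < 4 * π * (θ - s) :=
      mul_pos (mul_pos (by norm_num) Real.pi_pos) hσ
    have hIθ : I θ = ∫ r in Set.Ioc (0:ℝ) 1,
        (GN (t - θ) x r - GN (t - θ) x' r) ^ 2 * heatKernel (θ - s) (y - r) ^ 2 := by
      rw [hIdef]
      exact intervalIntegral.integral_of_le zero_le_one
    rw [hIθ]
    have hgint : Integrable
        (fun r => (4 * π * (θ - s))⁻¹ * (GN (t - θ) x r - GN (t - θ) x' r) ^ 2)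
        (volume.restrict (Set.Ioc (0:ℝ) 1)) :=
      (((GN_diff_cont (t - θ) x x' hτ).pow 2).integrableOn_Ioc).const_mul _
    have hL2' : ∫ r in Set.Ioc (0:ℝ) 1, (GN (t - θ) x r - GN (t - θ) x' r) ^ 2
        ≤ C2 * d ^ (2 * α) * (t - θ) ^ (-(1/2) - α) := by
      rw [← intervalIntegral.integral_of_le zero_le_one]
      exact hL2 (t - θ) x x' hτ
    calc ∫ r in Set.Ioc (0:ℝ) 1,
          (GN (t - θ) x r - GN (t - θ) x' r) ^ 2 * heatKernel (θ - s) (y - r) ^ 2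
        ≤ ∫ r in Set.Ioc (0:ℝ) 1,
            (4 * π * (θ - s))⁻¹ * (GN (t - θ) x r - GN (t - θ) x' r) ^ 2 := by
          apply integral_mono_of_nonneg
            (Filter.Eventually.of_forall fun r => by positivity) hgint
            (Filter.Eventually.of_forall fun r => ?_)
          dsimp only
          calc (GN (t - θ) x r - GN (t - θ) x' r) ^ 2 * heatKernel (θ - s) (y - r) ^ 2
              ≤ (GN (t - θ) x r - GN (t - θ) x' r) ^ 2 * (4 * π * (θ - s))⁻¹ :=
                mul_le_mul_of_nonneg_left (heatKernel_sq_le (θ - s) (y - r) hσ)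
                  (sq_nonneg _)
            _ = (4 * π * (θ - s))⁻¹ * (GN (t - θ) x r - GN (t - θ) x' r) ^ 2 := mul_comm _ _
      _ = (4 * π * (θ - s))⁻¹ * ∫ r in Set.Ioc (0:ℝ) 1,
            (GN (t - θ) x r - GN (t - θ) x' r) ^ 2 := integral_const_mul _ _
      _ ≤ (4 * π * (θ - s))⁻¹ * (C2 * d ^ (2 * α) * (t - θ) ^ (-(1/2) - α)) :=
          mul_le_mul_of_nonneg_left hL2' (inv_nonneg.mpr h4πσ.le)
      _ ≤ A2 * (t - θ) ^ (-(1/2) - α) := by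
          have h2πδ : (0:ℝ) < 2 * π * δ :=
            mul_pos (mul_pos two_pos Real.pi_pos) hδ
          have hle24 : 2 * π * δ ≤ 4 * π * (θ - s) := by
            calc 2 * π * δ = 4 * π * (δ / 2) := by ring
              _ ≤ 4 * π * (θ - s) := by
                  apply mul_le_mul_of_nonneg_left hσδ
                  positivity
          have h4 : (4 * π * (θ - s))⁻¹ ≤ (2 * π)⁻¹ * δ⁻¹ := by
            rw [show ((2 * π)⁻¹ * δ⁻¹ : ℝ) = (2 * π * δ)⁻¹ from (mul_inv (2 * π) δ).symm]
            exact inv_anti₀ h2πδ hle24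
          calc (4 * π * (θ - s))⁻¹ * (C2 * d ^ (2 * α) * (t - θ) ^ (-(1/2) - α))
              = (C2 * d ^ (2 * α) * (t - θ) ^ (-(1/2) - α)) * (4 * π * (θ - s))⁻¹ :=
                mul_comm _ _
            _ ≤ (C2 * d ^ (2 * α) * (t - θ) ^ (-(1/2) - α)) * ((2 * π)⁻¹ * δ⁻¹) := by
                apply mul_le_mul_of_nonneg_left h4
                exact mul_nonneg (mul_nonneg hC2.le hdnn) (Real.rpow_nonneg hτ.le _)
            _ = A2 * (t - θ) ^ (-(1/2) - α) := by rw [hA2]; ring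
  -- integrability of the majorants
  have hbase1 : IntervalIntegrable (fun θ : ℝ => (θ - s) ^ (-(1/2) : ℝ)) volume s m := by
    have h := (intervalIntegrable_rpow' (a := 0) (b := m - s)
      (by norm_num : (-1:ℝ) < -(1/2))).comp_sub_right s
    rw [zero_add, sub_add_cancel] at h
    exact h
  have hg1int : IntervalIntegrable (fun θ : ℝ => A1 * (θ - s) ^ (-(1/2) : ℝ)) volume s m :=
    hbase1.const_mul A1
  have hbase2 : IntervalIntegrable (fun θ : ℝ => (t - θ) ^ (-(1/2) - α : ℝ)) volume m t := by
    have h := (intervalIntegrable_rpow' (a := t - m) (b := 0)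
      (by linarith : (-1:ℝ) < -(1/2) - α)).comp_sub_left t
    rw [sub_sub_cancel, sub_zero] at h
    exact h
  have hg2int : IntervalIntegrable (fun θ : ℝ => A2 * (t - θ) ^ (-(1/2) - α : ℝ)) volume m t :=
    hbase2.const_mul A2
  -- a.e. bounds
  have hne1 : ∀ᵐ θ : ℝ ∂volume, θ ≠ s := by
    rw [ae_iff]
    have he : {θ : ℝ | ¬θ ≠ s} = {s} := by ext θ; simp
    rw [he]
    exact measure_singleton s
  have hne2 : ∀ᵐ θ : ℝ ∂volume, θ ≠ t := by
    rw [ae_iff]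
    have he : {θ : ℝ | ¬θ ≠ t} = {t} := by ext θ; simp
    rw [he]
    exact measure_singleton t
  have hae1 : ∀ᵐ θ ∂volume.restrict (Set.Icc s m),
      I θ ≤ A1 * (θ - s) ^ (-(1/2) : ℝ) := by
    filter_upwards [ae_restrict_mem measurableSet_Icc, ae_restrict_of_ae hne1] with θ h1 h2
    exact core1 θ h1 h2
  have hae2 : ∀ᵐ θ ∂volume.restrict (Set.Icc m t),
      I θ ≤ A2 * (t - θ) ^ (-(1/2) - α : ℝ) := by
    filter_upwards [ae_restrict_mem measurableSet_Icc, ae_restrict_of_ae hne2] with θ h1 h2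
    exact core2 θ h1 h2
  -- the two integral bounds
  have piece1 : ∫ θ in s..m, I θ ≤ 8 * C1 ^ 2 * c3 * (d ^ (2 * α) * δ ^ (-(1/2) - α)) := by
    calc ∫ θ in s..m, I θ ≤ ∫ θ in s..m, A1 * (θ - s) ^ (-(1/2) : ℝ) :=
          intervalIntegral.integral_mono_ae_restrict hsm hIsm hg1int hae1
      _ = A1 * ∫ θ in s..m, (θ - s) ^ (-(1/2) : ℝ) := intervalIntegral.integral_const_mul _ _
      _ = A1 * (2 * (δ / 2) ^ ((1:ℝ)/2)) := by
          rw [intervalIntegral.integral_comp_sub_right (fun u : ℝ => u ^ (-(1/2) : ℝ)) s,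
            integral_rpow (Or.inl (by norm_num : (-1:ℝ) < -(1/2))), sub_self, hms,
            show ((-(1/2) : ℝ) + 1) = (1/2 : ℝ) by norm_num,
            Real.zero_rpow (by norm_num : (1/2 : ℝ) ≠ 0)]
          ring
      _ ≤ A1 * (2 * δ ^ ((1:ℝ)/2)) := by
          apply mul_le_mul_of_nonneg_left _ hA10
          apply mul_le_mul_of_nonneg_left _ (by norm_num : (0:ℝ) ≤ 2)
          exact Real.rpow_le_rpow (by linarith [half_pos hδ]) (by linarith) (by norm_num)
      _ = 8 * C1 ^ 2 * c3 * (d ^ (2 * α) * δ ^ (-(1/2) - α)) := by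
          rw [hA1, show δ ^ (-(1/2) - α : ℝ) = δ ^ (-(1 + α)) * δ ^ ((1:ℝ)/2) by
            rw [← Real.rpow_add hδ]; congr 1; ring]
          ring
  have piece2 : ∫ θ in m..t, I θ ≤
      C2 * (2 * π)⁻¹ * (1/2 - α)⁻¹ * (d ^ (2 * α) * δ ^ (-(1/2) - α)) := by
    calc ∫ θ in m..t, I θ ≤ ∫ θ in m..t, A2 * (t - θ) ^ (-(1/2) - α : ℝ) :=
          intervalIntegral.integral_mono_ae_restrict hmt hImt hg2int hae2
      _ = A2 * ∫ θ in m..t, (t - θ) ^ (-(1/2) - α : ℝ) :=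
          intervalIntegral.integral_const_mul _ _
      _ = A2 * ((δ / 2) ^ ((1:ℝ)/2 - α) / (1/2 - α)) := by
          rw [intervalIntegral.integral_comp_sub_left (fun u : ℝ => u ^ (-(1/2) - α : ℝ)) t,
            integral_rpow (Or.inl (by linarith : (-1:ℝ) < -(1/2) - α)), sub_self, htm,
            show ((-(1/2) - α : ℝ) + 1) = (1/2 - α : ℝ) by ring,
            Real.zero_rpow hhalf.ne']
          ring
      _ ≤ A2 * (δ ^ ((1:ℝ)/2 - α) / (1/2 - α)) := by
          apply mul_le_mul_of_nonneg_left _ hA20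
          have hle : (δ / 2) ^ ((1:ℝ)/2 - α) ≤ δ ^ ((1:ℝ)/2 - α) :=
            Real.rpow_le_rpow (by linarith [half_pos hδ]) (by linarith) (by linarith)
          exact (div_le_div_iff_of_pos_right hhalf).mpr hle
      _ = C2 * (2 * π)⁻¹ * (1/2 - α)⁻¹ * (d ^ (2 * α) * δ ^ (-(1/2) - α)) := by
          rw [hA2, show δ ^ (-(1/2) - α : ℝ) = δ ^ (-1 : ℝ) * δ ^ ((1:ℝ)/2 - α) by
            rw [← Real.rpow_add hδ]; congr 1; ring,
            show (δ : ℝ)⁻¹ = δ ^ (-1 : ℝ) by rw [Real.rpow_neg_one]]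
          ring
  calc (∫ θ in s..m, I θ) + ∫ θ in m..t, I θ ≤
        8 * C1 ^ 2 * c3 * (d ^ (2 * α) * δ ^ (-(1/2) - α)) +
        C2 * (2 * π)⁻¹ * (1/2 - α)⁻¹ * (d ^ (2 * α) * δ ^ (-(1/2) - α)) :=
        add_le_add piece1 piece2
    _ = (8 * C1 ^ 2 * c3 + C2 * (2 * π)⁻¹ * (1/2 - α)⁻¹) * d ^ (2 * α) *
        δ ^ (-(1/2) - α) := by ring
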